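/- Weak maximum principle: let Ω ⊂ ℝⁿ be a bounded open set and M_a a weighted partial trace operator of class 𝒜̄. If u is upper semicontinuous on Ω̄ and satisfies M_a(D²u) ≥ 0 in Ω in the viscosity sense, then max_{Ω̄} u = max_{∂Ω} u. If u is lower semicontinuous on Ω̄ and satisfies M_a(D²u) ≤ 0 in Ω in the viscosity sense, then min_{Ω̄} u = min_{∂Ω} u. -/

import Mathlib

open Set Metric MeasureTheory Filter

noncomputable section

/-- Euclidean `n`-space `ℝⁿ`. -/
abbrev En (n : ℕ) : Type := EuclideanSpace ℝ (Fin n)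

/-- The eigenvalues of a (symmetric) matrix, arranged in nondecreasing order. -/
noncomputable def sortedEig {n : ℕ} (X : Matrix (Fin n) (Fin n) ℝ) : Fin n → ℝ :=
  if hX : X.IsHermitian then fun i => hX.eigenvalues (Tuple.sort hX.eigenvalues i) else 0

/-- The weighted partial trace operator `M_a(X) = Σ a_i λ_i(X)`. -/
noncomputable def Ma {n : ℕ} (a : Fin n → ℝ) (X : Matrix (Fin n) (Fin n) ℝ) : ℝ :=
  ∑ i, a i * sortedEig X i

/-- The last index of `Fin n`. -/
def lastIdx (n : ℕ) [NeZero n] : Fin n :=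
  ⟨n - 1, Nat.sub_lt (Nat.pos_of_ne_zero (NeZero.ne n)) Nat.one_pos⟩

/-- The class 𝒜̄ : all weights nonnegative, some weight positive. -/
def ClassAbar {n : ℕ} (a : Fin n → ℝ) : Prop := (∀ i, 0 ≤ a i) ∧ ∃ i, 0 < a i

/-- The class 𝒜 : nonnegative weights with `a 1 > 0` and `a n > 0`. -/
def ClassA {n : ℕ} [NeZero n] (a : Fin n → ℝ) : Prop :=
  (∀ i, 0 ≤ a i) ∧ 0 < a 0 ∧ 0 < a (lastIdx n)

/-- The class 𝒜₁ : nonnegative weights with `a 1 > 0`. -/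
def ClassA1 {n : ℕ} [NeZero n] (a : Fin n → ℝ) : Prop := (∀ i, 0 ≤ a i) ∧ 0 < a 0

/-- The class 𝒜ₙ : nonnegative weights with `a n > 0`. -/
def ClassAn {n : ℕ} [NeZero n] (a : Fin n → ℝ) : Prop :=
  (∀ i, 0 ≤ a i) ∧ 0 < a (lastIdx n)

/-- `a* = min (a 1) (a n)`. -/
noncomputable def aStar {n : ℕ} [NeZero n] (a : Fin n → ℝ) : ℝ := min (a 0) (a (lastIdx n))

/-- `â_j = (a 1 + ⋯ + a n) - a j`. -/
noncomputable def hatA {n : ℕ} (a : Fin n → ℝ) (j : Fin n) : ℝ := (∑ i, a i) - a j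

/-- The Hessian matrix of `φ` at `x`. -/
noncomputable def hess {n : ℕ} (φ : En n → ℝ) (x : En n) : Matrix (Fin n) (Fin n) ℝ :=
  fun i j => iteratedFDeriv ℝ 2 φ x ![EuclideanSpace.single i 1, EuclideanSpace.single j 1]

/-- The Hessian matrix of `φ` at `x`, with derivatives taken within `Ω`. -/
noncomputable def hessOn {n : ℕ} (Ω : Set (En n)) (φ : En n → ℝ) (x : En n) :
    Matrix (Fin n) (Fin n) ℝ :=
  fun i j =>
    iteratedFDerivWithin ℝ 2 φ Ω x ![EuclideanSpace.single i 1, EuclideanSpace.single j 1]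

/-- `u` is a viscosity subsolution of `M_a(D²u) = f` in `Ω`. -/
def IsViscSubsol {n : ℕ} (a : Fin n → ℝ) (Ω : Set (En n)) (f u : En n → ℝ) : Prop :=
  ∀ x₀ ∈ Ω, ∀ φ : En n → ℝ, ContDiff ℝ 2 φ →
    IsLocalMaxOn (fun x => u x - φ x) Ω x₀ → f x₀ ≤ Ma a (hess φ x₀)

/-- `u` is a viscosity supersolution of `M_a(D²u) = f` in `Ω`. -/
def IsViscSupersol {n : ℕ} (a : Fin n → ℝ) (Ω : Set (En n)) (f u : En n → ℝ) : Prop :=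
  ∀ x₀ ∈ Ω, ∀ φ : En n → ℝ, ContDiff ℝ 2 φ →
    IsLocalMinOn (fun x => u x - φ x) Ω x₀ → Ma a (hess φ x₀) ≤ f x₀

/-- `u` is a (continuous) viscosity solution of `M_a(D²u) = f` in `Ω`. -/
def IsViscSolution {n : ℕ} (a : Fin n → ℝ) (Ω : Set (En n)) (f u : En n → ℝ) : Prop :=
  ContinuousOn u Ω ∧ IsViscSubsol a Ω f u ∧ IsViscSupersol a Ω f u

/-- The `L^p` norm of `f` on `D`. -/
noncomputable def lpNormOn {n : ℕ} (p : ℝ) (D : Set (En n)) (f : En n → ℝ) : ℝ :=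
  (∫ x in D, |f x| ^ p) ^ (1 / p)

/-- The sup norm of `f` on `D`. -/
noncomputable def supAbsOn {n : ℕ} (D : Set (En n)) (f : En n → ℝ) : ℝ :=
  sSup ((fun x => |f x|) '' D)

/-- The Hölder seminorm `[h]_{β,D}`. -/
noncomputable def holderSemi {n : ℕ} (β : ℝ) (D : Set (En n)) (h : En n → ℝ) : ℝ :=
  sSup {r | ∃ x ∈ D, ∃ y ∈ D, x ≠ y ∧ r = |h x - h y| / ‖x - y‖ ^ β}

/-- The Hölder norm `‖g‖_{C^β(D)} = sup_D |g| + [g]_{β,D}`. -/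
noncomputable def cBetaNorm {n : ℕ} (β : ℝ) (D : Set (En n)) (g : En n → ℝ) : ℝ :=
  supAbsOn D g + holderSemi β D g

/-- `g` is `β`-Hölder continuous on `D`. -/
def HolderOn {n : ℕ} (β : ℝ) (D : Set (En n)) (g : En n → ℝ) : Prop :=
  ∃ K : ℝ, ∀ x ∈ D, ∀ y ∈ D, |g x - g y| ≤ K * ‖x - y‖ ^ β

/-- The `C^{1,β}(D)` norm: `sup|g| + sup|Dg| + [Dg]_{β,D}`. -/
noncomputable def c1BetaNorm {n : ℕ} (β : ℝ) (D : Set (En n)) (g : En n → ℝ) : ℝ :=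
  supAbsOn D g + sSup ((fun x => ‖fderiv ℝ g x‖) '' D) +
    sSup {r | ∃ x ∈ D, ∃ y ∈ D, x ≠ y ∧ r = ‖fderiv ℝ g x - fderiv ℝ g y‖ / ‖x - y‖ ^ β}

/-- `g ∈ C^{1,β}(D)`: differentiable with `β`-Hölder derivative on `D`. -/
def C1HolderOn {n : ℕ} (β : ℝ) (D : Set (En n)) (g : En n → ℝ) : Prop :=
  ContDiff ℝ 1 g ∧ ∃ K : ℝ, ∀ x ∈ D, ∀ y ∈ D,
    ‖fderiv ℝ g x - fderiv ℝ g y‖ ≤ K * ‖x - y‖ ^ β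

/-- Uniform exterior sphere condition with radius `R`: every boundary point lies on the
boundary of a closed ball of radius `R` containing `Ω̄`. -/
def ExtSphere {n : ℕ} (Ω : Set (En n)) (R : ℝ) : Prop :=
  ∀ y ∈ frontier Ω, ∃ z : En n, dist y z = R ∧ closure Ω ⊆ closedBall z R

/-- The cone `Σ_θ = {x : xₙ ≥ |x| cos θ}`. -/
def coneSet (n : ℕ) [NeZero n] (θ : ℝ) : Set (En n) := {x | ‖x‖ * Real.cos θ ≤ x (lastIdx n)}

/-- Uniform exterior cone condition. -/
def ExtCone {n : ℕ} [NeZero n] (Ω : Set (En n)) : Prop :=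
  ∃ θ₀ ∈ Set.Ioo (0 : ℝ) Real.pi, ∃ r₀ > (0 : ℝ), ∀ y ∈ frontier Ω,
    ∃ O : En n ≃ₗᵢ[ℝ] En n,
      closure Ω ∩ ball y r₀ ⊆ (fun x => y + O x) '' coneSet n θ₀

/-- Uniform Lipschitz boundary with Lipschitz constant `L`: near each boundary point, in
suitable rotated coordinates, `Ω` is the region above the graph of an `L`-Lipschitz
function. -/
def LipschitzBoundary {n : ℕ} [NeZero n] (Ω : Set (En n)) (L : ℝ) : Prop :=
  ∃ r₀ > (0 : ℝ), ∀ y ∈ frontier Ω, ∃ O : En n ≃ₗᵢ[ℝ] En n, ∃ ψ : En n → ℝ,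
    LipschitzWith (Real.toNNReal L) ψ ∧
    ∀ x ∈ ball (0 : En n) r₀,
      (y + O x ∈ Ω ↔ ψ (x - EuclideanSpace.single (lastIdx n) (x (lastIdx n))) < x (lastIdx n))

/-- The open cube of edge `ℓ` centered at the origin. -/
def cube (n : ℕ) (ℓ : ℝ) : Set (En n) := {x | ∀ i, |x i| < ℓ / 2}

/-- The upper concave envelope of `u` in `Ω`: the smallest concave function `≥ u` in `Ω`. -/
noncomputable def upperEnvelope {n : ℕ} (Ω : Set (En n)) (u : En n → ℝ) : En n → ℝ :=
  fun x => sInf {t | ∃ φ : En n → ℝ, ConcaveOn ℝ Ω φ ∧ (∀ z ∈ Ω, u z ≤ φ z) ∧ t = φ x}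

/-- The lower convex envelope of `u` in `Ω`: the largest convex function `≤ u` in `Ω`. -/
noncomputable def lowerEnvelope {n : ℕ} (Ω : Set (En n)) (u : En n → ℝ) : En n → ℝ :=
  fun x => sSup {t | ∃ φ : En n → ℝ, ConvexOn ℝ Ω φ ∧ (∀ z ∈ Ω, φ z ≤ u z) ∧ t = φ x}

end


section WMPHelpers

open Filter

/-- An upper semicontinuous function attains its maximum on a nonempty compact set. -/
lemma usc_exists_max {α : Type*} [TopologicalSpace α] {K : Set α} (hK : IsCompact K)
    (hne : K.Nonempty) {u : α → ℝ} (hu : UpperSemicontinuousOn u K) :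
    ∃ x ∈ K, ∀ y ∈ K, u y ≤ u x := by
  by_contra hcon
  push_neg at hcon
  choose! y hyK hylt using hcon
  have key : ∀ x ∈ K, ∃ O : Set α, IsOpen O ∧ x ∈ O ∧ ∀ z ∈ O ∩ K, u z < u (y x) := by
    intro x hx
    have h1 : ∀ᶠ z in nhdsWithin x K, u z < u (y x) := hu x hx _ (hylt x hx)
    rcases mem_nhdsWithin.1 h1 with ⟨O, hO, hxO, hsub⟩
    exact ⟨O, hO, hxO, fun z hz => hsub ⟨hz.1, hz.2⟩⟩
  choose! O hOo hxO hOlt using key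
  rcases hK.elim_nhds_subcover O (fun x hx => (hOo x hx).mem_nhds (hxO x hx)) with ⟨t, htK, hcov⟩
  have htne : t.Nonempty := by
    rcases hne with ⟨z, hz⟩
    rcases Set.mem_iUnion₂.1 (hcov hz) with ⟨x, hx, _⟩
    exact ⟨x, hx⟩
  rcases t.exists_max_image (fun x => u (y x)) htne with ⟨x₀, hx₀t, hx₀max⟩
  have hzK : y x₀ ∈ K := hyK x₀ (htK x₀ hx₀t)
  rcases Set.mem_iUnion₂.1 (hcov hzK) with ⟨x₁, hx₁t, hzO⟩
  have := hOlt x₁ (htK x₁ hx₁t) (y x₀) ⟨hzO, hzK⟩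
  exact absurd (this.trans_le (hx₀max x₁ hx₁t)) (lt_irrefl _)

lemma lsc_neg_usc {α : Type*} [TopologicalSpace α] {K : Set α} {u : α → ℝ}
    (h : LowerSemicontinuousOn u K) : UpperSemicontinuousOn (fun x => -u x) K := by
  intro x hx t ht
  have ht2 : -u x < t := ht
  have : -t < u x := by linarith
  filter_upwards [h x hx (-t) this] with z hz
  linarith

lemma sortedEig_smul_one {n : ℕ} (c : ℝ) (i : Fin n) :
    sortedEig (c • (1 : Matrix (Fin n) (Fin n) ℝ)) i = c := by
  have hH : (c • (1 : Matrix (Fin n) (Fin n) ℝ)).IsHermitian := by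
    simp [Matrix.IsHermitian]
  have hev : ∀ j, hH.eigenvalues j = c := by
    intro j
    have hv := hH.mulVec_eigenvectorBasis j
    have hvne : (⇑(hH.eigenvectorBasis j) : Fin n → ℝ) ≠ 0 := by
      have := hH.eigenvectorBasis.toBasis.ne_zero j
      simpa using this
    rw [Matrix.smul_mulVec, Matrix.one_mulVec] at hv
    rcases Function.ne_iff.1 hvne with ⟨k, hk⟩
    have := congrFun hv k
    simp only [Pi.smul_apply, smul_eq_mul] at this
    exact (mul_right_cancel₀ hk this).symm
  rw [sortedEig, dif_pos hH, hev]

lemma Ma_smul_one {n : ℕ} (a : Fin n → ℝ) (c : ℝ) :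
    Ma a (c • (1 : Matrix (Fin n) (Fin n) ℝ)) = (∑ i, a i) * c := by
  simp [Ma, sortedEig_smul_one, Finset.sum_mul]

/-- The second-derivative "bilinear form" of the quadratic `x ↦ c⟪x,x⟫`. -/
noncomputable def Lq {n : ℕ} (c : ℝ) : En n →L[ℝ] (En n →L[ℝ] ℝ) :=
  ∑ i, (2 * c) • ((EuclideanSpace.proj i (𝕜 := ℝ)).smulRight (EuclideanSpace.proj i))

lemma Lq_apply {n : ℕ} (c : ℝ) (y v : En n) :
    Lq c y v = ∑ i, 2 * c * (y i * v i) := by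
  simp [Lq, ContinuousLinearMap.sum_apply, mul_assoc]

lemma hasFDerivAt_quad {n : ℕ} (c : ℝ) (y : En n) :
    HasFDerivAt (fun x : En n => c * (inner ℝ x x : ℝ)) (Lq c y) y := by
  have h0 := ((hasFDerivAt_id y).inner ℝ (hasFDerivAt_id y)).const_mul c
  refine h0.congr_fderiv ?_
  ext v
  simp [Lq_apply, PiLp.inner_apply, RCLike.inner_apply, Finset.mul_sum]
  rw [mul_add, Finset.mul_sum, Finset.mul_sum, ← Finset.sum_add_distrib]
  exact Finset.sum_congr rfl fun k _ => by ring

lemma fderiv_quad {n : ℕ} (c : ℝ) :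
    (fderiv ℝ (fun x : En n => c * (inner ℝ x x : ℝ))) = fun y => Lq c y := by
  funext y
  exact (hasFDerivAt_quad c y).fderiv

lemma hess_quad {n : ℕ} (c : ℝ) (x : En n) :
    hess (fun y : En n => c * (inner ℝ y y : ℝ)) x
      = (2 * c) • (1 : Matrix (Fin n) (Fin n) ℝ) := by
  funext i j
  have h2 : hess (fun y : En n => c * (inner ℝ y y : ℝ)) x i j
      = fderiv ℝ (fderiv ℝ (fun y : En n => c * (inner ℝ y y : ℝ))) x
          (EuclideanSpace.single i 1) (EuclideanSpace.single j 1) := by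
    rw [hess, iteratedFDeriv_two_apply]
    simp
  rw [h2, fderiv_quad]
  have h3 : fderiv ℝ (fun y => Lq (n := n) c y) x = Lq c := (Lq (n := n) c).fderiv
  rw [h3, Lq_apply]
  simp only [EuclideanSpace.single_apply, Matrix.smul_apply, Matrix.one_apply, smul_eq_mul]
  by_cases h : i = j
  · simp [h]
  · simp [h, Ne.symm h]

lemma contDiff_quad {n : ℕ} (c : ℝ) :
    ContDiff ℝ 2 (fun x : En n => c * (inner ℝ x x : ℝ)) :=
  contDiff_const.mul (contDiff_id.inner ℝ contDiff_id)

end WMPHelpers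

/-- **Weak maximum principle (Corollary 3.2).** Let `Ω ⊆ ℝⁿ` be bounded open and
`M_a ∈ 𝒜̄`. If `u` is usc on `Ω̄` with `M_a(D²u) ≥ 0` in `Ω` in the viscosity sense then
`max_{Ω̄} u = max_{∂Ω} u`; if `u` is lsc on `Ω̄` with `M_a(D²u) ≤ 0` in the viscosity
sense then `min_{Ω̄} u = min_{∂Ω} u`. -/


theorem weak_maximum_principle (n : ℕ) (a : Fin n → ℝ) (ha : ClassAbar a)
    (Ω : Set (En n)) (hΩo : IsOpen Ω) (hΩb : Bornology.IsBounded Ω) :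
    (∀ u : En n → ℝ, UpperSemicontinuousOn u (closure Ω) →
      IsViscSubsol a Ω (fun _ => 0) u →
      sSup (u '' closure Ω) = sSup (u '' frontier Ω)) ∧
    (∀ u : En n → ℝ, LowerSemicontinuousOn u (closure Ω) →
      IsViscSupersol a Ω (fun _ => 0) u →
      sInf (u '' closure Ω) = sInf (u '' frontier Ω)) := by
  have hsum : 0 < ∑ i, a i := by
    rcases ha.2 with ⟨i0, hi0⟩
    exact Finset.sum_pos' (fun i _ => ha.1 i) ⟨i0, Finset.mem_univ _, hi0⟩
  have hnontriv : ∀ (h : Ω = Set.univ), False := by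
    intro h
    rcases ha.2 with ⟨i0, _⟩
    rcases hΩb.subset_closedBall 0 with ⟨r, hr⟩
    have hx : EuclideanSpace.single i0 (|r| + 1) ∈ Ω := h ▸ Set.mem_univ _
    have := hr hx
    rw [mem_closedBall, dist_zero_right, EuclideanSpace.norm_single, Real.norm_eq_abs] at this
    have h1 : |(|r| + 1)| = |r| + 1 := abs_of_nonneg (by positivity)
    rw [h1] at this
    have := le_abs_self r
    linarith
  have hKc : IsCompact (closure Ω) := hΩb.isCompact_closure
  rcases hΩb.subset_closedBall 0 with ⟨R, hR⟩
  have hRb : ∀ x ∈ closure Ω, (inner ℝ x x : ℝ) ≤ R ^ 2 := by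
    intro x hx
    have h1 : closure Ω ⊆ closedBall 0 R := closure_minimal hR isClosed_closedBall
    have h2 := h1 hx
    rw [mem_closedBall, dist_zero_right] at h2
    rw [real_inner_self_eq_norm_sq]
    nlinarith [norm_nonneg x]
  constructor
  · -- maximum principle for subsolutions
    intro u husc hsub
    rcases Ω.eq_empty_or_nonempty with rfl | hne
    · simp
    have hKne : (closure Ω).Nonempty := hne.closure
    have hfne : (frontier Ω).Nonempty := by
      rw [Set.nonempty_iff_ne_empty]
      intro hfe
      rcases isClopen_iff.1 (isClopen_iff_frontier_eq_empty.2 hfe) with h | h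
      · exact hne.ne_empty h
      · exact hnontriv h
    obtain ⟨xm, hxmK, hxmmax⟩ := usc_exists_max hKc hKne husc
    have hbddc : BddAbove (u '' closure Ω) := by
      refine ⟨u xm, ?_⟩
      rintro _ ⟨z, hz, rfl⟩
      exact hxmmax z hz
    have hbddf : BddAbove (u '' frontier Ω) :=
      hbddc.mono (Set.image_mono frontier_subset_closure)
    have hmle : sSup (u '' frontier Ω) ≤ sSup (u '' closure Ω) :=
      csSup_le_csSup hbddc (hfne.image u) (Set.image_mono frontier_subset_closure)
    refine le_antisymm ?_ hmle
    by_contra hlt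
    push_neg at hlt
    have hMx : sSup (u '' closure Ω) = u xm := by
      refine le_antisymm (csSup_le (hKne.image u) ?_) (le_csSup hbddc ⟨xm, hxmK, rfl⟩)
      rintro _ ⟨z, hz, rfl⟩
      exact hxmmax z hz
    set m := sSup (u '' frontier Ω) with hm
    have hmlt : m < u xm := hMx ▸ hlt
    set ε := (u xm - m) / (R ^ 2 + 1) with hε
    have hε1 : (0:ℝ) < R ^ 2 + 1 := by positivity
    have hεpos : 0 < ε := div_pos (by linarith) hε1
    have hε2 : ε * (R ^ 2 + 1) = u xm - m := div_mul_cancel₀ _ (ne_of_gt hε1)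
    set v := fun x : En n => u x + ε * (inner ℝ x x : ℝ) with hv
    have hvusc : UpperSemicontinuousOn v (closure Ω) := by
      have hcont : Continuous fun x : En n => ε * (inner ℝ x x : ℝ) :=
        (contDiff_quad (n := n) ε).continuous
      exact husc.add (hcont.upperSemicontinuous.upperSemicontinuousOn _)
    obtain ⟨z, hzK, hzmax⟩ := usc_exists_max hKc hKne hvusc
    have hzΩ : z ∈ Ω := by
      have hznf : z ∉ frontier Ω := by
        intro hzf
        have h1 : u xm ≤ v z := by
          have h1a : u xm ≤ v xm := by
            have h := real_inner_self_nonneg (x := xm)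
            show u xm ≤ u xm + ε * (inner ℝ xm xm : ℝ)
            nlinarith
          exact h1a.trans (hzmax xm hxmK)
        have h2 : u z ≤ m := le_csSup hbddf ⟨z, hzf, rfl⟩
        have h3 : (inner ℝ z z : ℝ) ≤ R ^ 2 := hRb z (frontier_subset_closure hzf)
        have h4 : v z ≤ m + ε * R ^ 2 := by
          have h := real_inner_self_nonneg (x := z)
          show u z + ε * (inner ℝ z z : ℝ) ≤ m + ε * R ^ 2
          nlinarith
        nlinarith
      have : z ∈ closure Ω \ frontier Ω := ⟨hzK, hznf⟩
      rwa [closure_diff_frontier, hΩo.interior_eq] at this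
    set φ := fun x : En n => (-ε) * (inner ℝ x x : ℝ) with hφ
    have hφc : ContDiff ℝ 2 φ := contDiff_quad (-ε)
    have hlocmax : IsLocalMaxOn (fun x => u x - φ x) Ω z := by
      have hfeq : (fun x : En n => u x - φ x) = v := by
        funext x
        simp only [hφ, hv]
        ring
      rw [hfeq]
      exact eventually_nhdsWithin_of_forall fun y hy => hzmax y (subset_closure hy)
    have h0 := hsub z hzΩ φ hφc hlocmax
    rw [hφ, hess_quad, Ma_smul_one] at h0
    replace h0 : (0:ℝ) ≤ (∑ i, a i) * (2 * -ε) := h0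
    nlinarith [mul_pos hsum hεpos]
  · -- minimum principle for supersolutions
    intro u hlsc hsup
    rcases Ω.eq_empty_or_nonempty with rfl | hne
    · simp
    have hKne : (closure Ω).Nonempty := hne.closure
    have hfne : (frontier Ω).Nonempty := by
      rw [Set.nonempty_iff_ne_empty]
      intro hfe
      rcases isClopen_iff.1 (isClopen_iff_frontier_eq_empty.2 hfe) with h | h
      · exact hne.ne_empty h
      · exact hnontriv h
    obtain ⟨xm, hxmK, hxmmax⟩ := usc_exists_max hKc hKne (lsc_neg_usc hlsc)
    have hxmmin : ∀ y ∈ closure Ω, u xm ≤ u y := by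
      intro y hy
      have := hxmmax y hy
      linarith
    have hbddc : BddBelow (u '' closure Ω) := by
      refine ⟨u xm, ?_⟩
      rintro _ ⟨z, hz, rfl⟩
      exact hxmmin z hz
    have hbddf : BddBelow (u '' frontier Ω) :=
      hbddc.mono (Set.image_mono frontier_subset_closure)
    have hmle : sInf (u '' closure Ω) ≤ sInf (u '' frontier Ω) :=
      csInf_le_csInf hbddc (hfne.image u) (Set.image_mono frontier_subset_closure)
    refine le_antisymm hmle ?_
    by_contra hlt
    push_neg at hlt
    have hMx : sInf (u '' closure Ω) = u xm := by
      refine le_antisymm (csInf_le hbddc ⟨xm, hxmK, rfl⟩) (le_csInf (hKne.image u) ?_)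
      rintro _ ⟨z, hz, rfl⟩
      exact hxmmin z hz
    set m := sInf (u '' frontier Ω) with hm
    have hmlt : u xm < m := hMx ▸ hlt
    set ε := (m - u xm) / (R ^ 2 + 1) with hε
    have hε1 : (0:ℝ) < R ^ 2 + 1 := by positivity
    have hεpos : 0 < ε := div_pos (by linarith) hε1
    have hε2 : ε * (R ^ 2 + 1) = m - u xm := div_mul_cancel₀ _ (ne_of_gt hε1)
    set w := fun x : En n => u x - ε * (inner ℝ x x : ℝ) with hw
    have hwusc : UpperSemicontinuousOn (fun x => -w x) (closure Ω) := by
      have hcont : Continuous fun x : En n => ε * (inner ℝ x x : ℝ) :=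
        (contDiff_quad (n := n) ε).continuous
      have heq : (fun x : En n => -w x) = fun x => (-u x) + ε * (inner ℝ x x : ℝ) := by
        funext x
        simp only [hw]
        ring
      rw [heq]
      exact (lsc_neg_usc hlsc).add (hcont.upperSemicontinuous.upperSemicontinuousOn _)
    obtain ⟨z, hzK, hzmax⟩ := usc_exists_max hKc hKne hwusc
    have hzmin : ∀ y ∈ closure Ω, w z ≤ w y := by
      intro y hy
      have := hzmax y hy
      linarith
    have hzΩ : z ∈ Ω := by
      have hznf : z ∉ frontier Ω := by
        intro hzf
        have h1 : w z ≤ u xm := by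
          have h1a : w xm ≤ u xm := by
            have h := real_inner_self_nonneg (x := xm)
            show u xm - ε * (inner ℝ xm xm : ℝ) ≤ u xm
            nlinarith
          exact (hzmin xm hxmK).trans h1a
        have h2 : m ≤ u z := csInf_le hbddf ⟨z, hzf, rfl⟩
        have h3 : (inner ℝ z z : ℝ) ≤ R ^ 2 := hRb z (frontier_subset_closure hzf)
        have h4 : m - ε * R ^ 2 ≤ w z := by
          show m - ε * R ^ 2 ≤ u z - ε * (inner ℝ z z : ℝ)
          nlinarith
        nlinarith
      have : z ∈ closure Ω \ frontier Ω := ⟨hzK, hznf⟩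
      rwa [closure_diff_frontier, hΩo.interior_eq] at this
    set φ := fun x : En n => ε * (inner ℝ x x : ℝ) with hφ
    have hφc : ContDiff ℝ 2 φ := contDiff_quad ε
    have hlocmin : IsLocalMinOn (fun x => u x - φ x) Ω z := by
      have hfeq : (fun x : En n => u x - φ x) = w := by
        funext x
        simp only [hφ, hw]
      rw [hfeq]
      exact eventually_nhdsWithin_of_forall fun y hy => hzmin y (subset_closure hy)
    have h0 := hsup z hzΩ φ hφc hlocmin
    rw [hφ, hess_quad, Ma_smul_one] at h0
    replace h0 : (∑ i, a i) * (2 * ε) ≤ (0:ℝ) := h0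
    nlinarith [mul_pos hsum hεpos]
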